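/- Let A be a commutative Artinian ring. Then the canonical ring homomorphism from A to the product of its localizations A_m, where m runs over the (finitely many) maximal ideals of A, is an isomorphism. -/

import Mathlib

/-- Let `A` be a commutative Artinian ring. Then the canonical ring homomorphism
from `A` to the product of its localizations `A_m`, where `m` runs over the (finitely many)
maximal ideals of `A`, is an isomorphism (i.e. it is bijective). -/
theorem stmt3 {A : Type*} [CommRing A] [IsArtinianRing A] :
    Function.Bijective
      (Pi.ringHom (fun m : {m : Ideal A // m.IsMaximal} =>
        letI : m.1.IsPrime := m.2.isPrime
        algebraMap A (Localization.AtPrime m.1))) := by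
  have : Finite (PrimeSpectrum A) := by
    have h : Finite {I : Ideal A | I.IsPrime} := (PrimeSpectrum.equivSubtype A).finite_iff.mp inferInstance
    exact Finite.of_injective (fun p : PrimeSpectrum A => (⟨p.1, p.2⟩ : {I : Ideal A | I.IsPrime}))
      (by intro p q h; ext1; exact congrArg Subtype.val h)
  have : DiscreteTopology (PrimeSpectrum A) :=
    PrimeSpectrum.discreteTopology_iff_finite_and_krullDimLE_zero.mpr
      ⟨this, .mk₀ fun I hI => IsArtinianRing.isMaximal_of_isPrime I⟩
  exact ⟨fun a b h => MaximalSpectrum.toPiLocalization_injective A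
      (funext fun I => congr_fun h ⟨I.1, I.2⟩),
    fun y => by
      obtain ⟨r, hr⟩ := PrimeSpectrum.maximalSpectrumToPiLocalization_surjective_of_discreteTopology A
        (fun I => y ⟨I.1, I.2⟩)
      exact ⟨r, funext fun m => congr_fun hr ⟨m.1, m.2⟩⟩⟩
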